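/- arXiv:2003.11928 — 3 statements merged into one kernel-verified Lean document; each statement's English description precedes it below -/
import Mathlib

section
/- For any m×n real matrix P with entries in [0,1], row sums ≤ 1, column sums ≤ 1, and total sum k, P lies in the convex hull of the set of binary matrices with row sums ≤ 1, column sums ≤ 1, and total sum k. In particular, the extreme points of the relaxed polytope are exactly the k-cardinality partial permutation matrices. -/
/-!
Pad `P` to a square doubly stochastic matrix `[[P, u], [v, 0]]`: `card ι - k` extra columns `u`
absorb the row deficits `1 - ∑ a, P i a` and `card κ - k` extra rows `v` absorb the column
deficits; the total mass `k` is exactly what makes both blocks stochastic. By Birkhoff's theorem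
the padded matrix is a convex combination of bijection matrices, and since its lower-right block
vanishes, only bijections sending every extra row to an original column occur. Such a bijection
uses `card κ - (card κ - k) = k` original rows and columns in its upper-left block, which is
therefore a partial permutation matrix of mass `k`. Binary points of the unit cube are extreme,
which gives the description of the extreme points.
-/

open Finset Matrix

theorem mem_convexHull_setOf_eq_zero {𝕜 E : Type*} [Field 𝕜] [LinearOrder 𝕜]
    [IsStrictOrderedRing 𝕜] [AddCommGroup E] [Module 𝕜 E] {S : Set E} {x : E}
    (f : E →ₗ[𝕜] 𝕜) (hf : ∀ s ∈ S, 0 ≤ f s) (hx : x ∈ convexHull 𝕜 S) (hfx : f x = 0) :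
    x ∈ convexHull 𝕜 {s ∈ S | f s = 0} := by
  classical
  obtain ⟨ι, t, w, z, hw₀, hw₁, hz, rfl⟩ := (convexHull_eq S).subset hx
  have hterm : ∀ i ∈ t, w i * f (z i) = 0 := by
    refine (sum_eq_zero_iff_of_nonneg fun i hi => mul_nonneg (hw₀ i hi) (hf _ (hz i hi))).1 ?_
    simpa [centerMass_eq_of_sum_1 _ _ hw₁] using hfx
  rw [← centerMass_filter_ne_zero]
  refine (filter _ t).centerMass_mem_convexHull (fun i hi => hw₀ i (mem_filter.1 hi).1) ?_
    fun i hi => ?_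
  · rw [sum_filter_ne_zero, hw₁]; exact one_pos
  · obtain ⟨hit, hwi⟩ := mem_filter.1 hi
    exact ⟨hz i hit, (mul_eq_zero.1 (hterm i hit)).resolve_left hwi⟩

theorem mem_extremePoints_of_eq_zero_or_eq_one {ι κ : Type*} {S : Set (ι → κ → ℝ)}
    {Q : ι → κ → ℝ} (hS : ∀ P ∈ S, ∀ i a, P i a ∈ Set.Icc (0 : ℝ) 1) (hQ : Q ∈ S)
    (h01 : ∀ i a, Q i a = 0 ∨ Q i a = 1) : Q ∈ S.extremePoints ℝ := by
  let cube : Set (ι → κ → ℝ) := Set.univ.pi fun _ => Set.univ.pi fun _ => Set.Icc 0 1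
  have hcorner : Q ∈ cube.extremePoints ℝ := by
    simp only [cube, extremePoints_pi, Set.extremePoints_Icc zero_le_one]
    exact fun i _ a _ => h01 i a
  have hScube : S ⊆ cube := fun P hP i _ a _ => hS P hP i a
  exact inter_extremePoints_subset_extremePoints_of_subset hScube ⟨hQ, hcorner⟩

theorem PEquiv.toMatrix_nonneg {m n R : Type*} [DecidableEq n] [Semiring R] [PartialOrder R]
    [ZeroLEOneClass R] (f : m ≃. n) (i : m) (j : n) : 0 ≤ f.toMatrix (α := R) i j := by
  rw [PEquiv.toMatrix_apply]; split_ifs <;> simp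

theorem mem_convexHull_range_toMatrix {R C 𝕜 : Type*} [Fintype R] [Fintype C] [DecidableEq C]
    [Field 𝕜] [LinearOrder 𝕜] [IsStrictOrderedRing 𝕜]
    (hcard : Fintype.card R = Fintype.card C) {M : Matrix R C 𝕜} (h₀ : ∀ x y, 0 ≤ M x y)
    (hrow : ∀ x, ∑ y, M x y = 1) (hcol : ∀ y, ∑ x, M x y = 1) :
    M ∈ convexHull 𝕜 (Set.range fun τ : R ≃ C => (τ.toPEquiv.toMatrix : Matrix R C 𝕜)) := by
  classical
  let e : C ≃ R := Fintype.equivOfCardEq hcard.symm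
  let N : Matrix R R 𝕜 := fun x z => M x (e.symm z)
  have hN : N ∈ doublyStochastic 𝕜 R := by
    refine mem_doublyStochastic_iff_sum.2 ⟨fun x z => h₀ _ _, fun x => ?_, fun z => hcol _⟩
    rw [← hrow x]; exact e.symm.sum_comp (M x)
  rw [← SetLike.mem_coe, doublyStochastic_eq_convexHull_permMatrix] at hN
  let reindex := (reindexLinearEquiv 𝕜 𝕜 (Equiv.refl R) e.symm).toLinearMap
  have hM : reindex N = M := by
    ext x y; exact congrArg (M x) (e.symm_apply_apply y)
  have himage := reindex.image_convexHull _ ▸ Set.mem_image_of_mem reindex hN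
  rw [hM] at himage
  refine convexHull_mono ?_ himage
  rintro _ ⟨_, ⟨σ, rfl⟩, rfl⟩
  refine ⟨σ.trans e.symm, ?_⟩
  ext x y
  simp [reindex, reindex_apply, PEquiv.toMatrix_apply, Equiv.toPEquiv_apply, Equiv.symm_apply_eq]

section Blocks

variable {ι κ α β : Type*} (R : Type*) [Semiring R]

def toBlocks₁₁LinearMap : Matrix (ι ⊕ β) (κ ⊕ α) R →ₗ[R] Matrix ι κ R where
  toFun := toBlocks₁₁
  map_add' _ _ := rfl
  map_smul' _ _ := rfl

@[simps]
def toBlocks₂₂Sum [Fintype α] [Fintype β] : Matrix (ι ⊕ β) (κ ⊕ α) R →ₗ[R] R where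
  toFun N := ∑ b, ∑ c, N (.inr b) (.inr c)
  map_add' _ _ := by simp [sum_add_distrib]
  map_smul' _ _ := by simp [mul_sum]

theorem ne_inr_of_toBlocks₂₂Sum_toMatrix_eq_zero [Fintype α] [Fintype β] [DecidableEq κ]
    [DecidableEq α] {τ : ι ⊕ β ≃ κ ⊕ α}
    (hτ : toBlocks₂₂Sum ℝ (τ.toPEquiv.toMatrix : Matrix _ _ ℝ) = 0)
    (b : β) (c : α) : τ (.inr b) ≠ .inr c := by
  intro hbc
  rw [toBlocks₂₂Sum_apply] at hτ
  have hrow := (sum_eq_zero_iff_of_nonneg fun b _ =>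
    sum_nonneg fun c _ => PEquiv.toMatrix_nonneg _ _ _).1 hτ b (mem_univ b)
  have hentry := (sum_eq_zero_iff_of_nonneg fun c _ =>
    PEquiv.toMatrix_nonneg _ _ _).1 hrow c (mem_univ c)
  simp [PEquiv.toMatrix_apply, hbc] at hentry

end Blocks

variable {ι κ : Type*} [Fintype ι] [Fintype κ]

variable (ι κ) in
def substochasticPolytope (k : ℕ) : Set (ι → κ → ℝ) :=
  {P | (∀ i a, P i a ∈ Set.Icc (0 : ℝ) 1) ∧ (∀ i, ∑ a, P i a ≤ 1) ∧ (∀ a, ∑ i, P i a ≤ 1) ∧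
    ∑ i, ∑ a, P i a = (k : ℝ)}

variable (ι κ) in
def partialPermMatrices (k : ℕ) : Set (ι → κ → ℝ) :=
  {Q | (∀ i a, Q i a = 0 ∨ Q i a = 1) ∧ (∀ i, ∑ a, Q i a ≤ 1) ∧ (∀ a, ∑ i, Q i a ≤ 1) ∧
    ∑ i, ∑ a, Q i a = (k : ℝ)}

theorem partialPermMatrices_subset_substochasticPolytope (k : ℕ) :
    partialPermMatrices ι κ k ⊆ substochasticPolytope ι κ k := by
  rintro Q ⟨h01, hrow, hcol, htot⟩
  refine ⟨fun i a => ?_, hrow, hcol, htot⟩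
  rcases h01 i a with h | h <;> simp [h]

theorem convex_substochasticPolytope (k : ℕ) : Convex ℝ (substochasticPolytope ι κ k) := by
  rintro P ⟨hP01, hProw, hPcol, hPtot⟩ Q ⟨hQ01, hQrow, hQcol, hQtot⟩ s t hs ht hst
  refine ⟨fun i a => convex_Icc 0 1 (hP01 i a) (hQ01 i a) hs ht hst, fun i => ?_, fun a => ?_, ?_⟩
    <;> simp only [Pi.add_apply, Pi.smul_apply, smul_eq_mul, sum_add_distrib, ← mul_sum]
  · linarith [mul_le_mul_of_nonneg_left (hProw i) hs, mul_le_mul_of_nonneg_left (hQrow i) ht]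
  · linarith [mul_le_mul_of_nonneg_left (hPcol a) hs, mul_le_mul_of_nonneg_left (hQcol a) ht]
  · rw [hPtot, hQtot]; linear_combination (k : ℝ) * hst

theorem transpose_mem_substochasticPolytope {k : ℕ} {P : ι → κ → ℝ}
    (hP : P ∈ substochasticPolytope ι κ k) : Pᵀ ∈ substochasticPolytope κ ι k := by
  obtain ⟨h01, hrow, hcol, htot⟩ := hP
  exact ⟨fun a i => h01 i a, hcol, hrow, sum_comm.trans htot⟩

theorem sum_one_sub_sum_eq_card_sub {k : ℕ} {P : ι → κ → ℝ}
    (hP : P ∈ substochasticPolytope ι κ k) :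
    ∑ i, (1 - ∑ a, P i a) = Fintype.card ι - k := by
  simp [sum_sub_distrib, hP.2.2.2]

noncomputable def slackExtension (P : ι → κ → ℝ) (α β : Type*) [Fintype α] [Fintype β] :
    Matrix (ι ⊕ β) (κ ⊕ α) ℝ
  | .inl i, .inl a => P i a
  | .inl i, .inr _ => (1 - ∑ a, P i a) / Fintype.card α
  | .inr _, .inl a => (1 - ∑ i, P i a) / Fintype.card β
  | .inr _, .inr _ => 0

section SlackExtension

variable {α β : Type*} [Fintype α] [Fintype β] {k : ℕ} {P : ι → κ → ℝ}

theorem slackExtension_transpose (P : ι → κ → ℝ) :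
    (slackExtension P α β)ᵀ = slackExtension Pᵀ β α := by
  ext (a | b) (i | c) <;> rfl

theorem slackExtension_nonneg (hP : P ∈ substochasticPolytope ι κ k) :
    ∀ x y, 0 ≤ slackExtension P α β x y := by
  obtain ⟨h01, hrow, hcol, -⟩ := hP
  rintro (i | b) (a | c)
  · exact (h01 i a).1
  · exact div_nonneg (sub_nonneg.2 (hrow i)) (Nat.cast_nonneg _)
  · exact div_nonneg (sub_nonneg.2 (hcol a)) (Nat.cast_nonneg _)
  · exact le_rfl

theorem sum_slackExtension_row (hP : P ∈ substochasticPolytope ι κ k)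
    (hα : Fintype.card α + k = Fintype.card ι) (hβ : Fintype.card β + k = Fintype.card κ) :
    ∀ x, ∑ y, slackExtension P α β x y = 1 := by
  have hrowDeficit : ∑ i, (1 - ∑ a, P i a) = Fintype.card α := by
    rw [sum_one_sub_sum_eq_card_sub hP, ← hα]; push_cast; ring
  have hcolDeficit : ∑ a, (1 - ∑ i, P i a) = Fintype.card β := by
    refine (sum_one_sub_sum_eq_card_sub (transpose_mem_substochasticPolytope hP)).trans ?_
    rw [← hβ]; push_cast; ring
  rintro (i | b)
  · suffices h : (Fintype.card α : ℝ) * ((1 - ∑ a, P i a) / Fintype.card α) = 1 - ∑ a, P i a by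
      simp [Fintype.sum_sum_type, slackExtension, h]
    rcases eq_or_ne (Fintype.card α : ℝ) 0 with hα0 | hα0
    · -- without slack columns every row of `P` is already full
      have := (sum_eq_zero_iff_of_nonneg fun i _ => sub_nonneg.2 (hP.2.1 i)).1
        (hrowDeficit.trans hα0) i (mem_univ i)
      simp [hα0, this]
    · exact mul_div_cancel₀ _ hα0
  · have hβ0 : (Fintype.card β : ℝ) ≠ 0 := Nat.cast_ne_zero.2 (Fintype.card_pos_iff.2 ⟨b⟩).ne'
    simp [Fintype.sum_sum_type, slackExtension, ← sum_div, hcolDeficit, hβ0]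

theorem sum_slackExtension_col (hP : P ∈ substochasticPolytope ι κ k)
    (hα : Fintype.card α + k = Fintype.card ι) (hβ : Fintype.card β + k = Fintype.card κ) :
    ∀ y, ∑ x, slackExtension P α β x y = 1 := fun y => by
  simpa [← slackExtension_transpose] using
    sum_slackExtension_row (transpose_mem_substochasticPolytope hP) hβ hα y

theorem toBlocks₁₁_toMatrix_mem_partialPermMatrices [DecidableEq κ] [DecidableEq α]
    (τ : ι ⊕ β ≃ κ ⊕ α) (hτ : ∀ b c, τ (.inr b) ≠ .inr c)
    (hβ : Fintype.card β + k = Fintype.card κ) :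
    (τ.toPEquiv.toMatrix : Matrix _ _ ℝ).toBlocks₁₁ ∈ partialPermMatrices ι κ k := by
  have hentry : ∀ i a, (τ.toPEquiv.toMatrix : Matrix _ _ ℝ).toBlocks₁₁ i a =
      if τ (.inl i) = .inl a then 1 else 0 := by
    simp [toBlocks₁₁, PEquiv.toMatrix_apply, Equiv.toPEquiv_apply]
  have hrow : ∀ x, ∑ a, (if τ x = .inl a then (1 : ℝ) else 0) = if (τ x).isLeft then 1 else 0 := by
    intro x; cases τ x <;> simp
  have hleft : ∑ x, (if (τ x).isLeft then (1 : ℝ) else 0) = Fintype.card κ := by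
    rw [τ.sum_comp (fun y => if y.isLeft then (1 : ℝ) else 0), Fintype.sum_sum_type]; simp
  refine ⟨fun i a => ?_, fun i => ?_, fun a => ?_, ?_⟩
  · rw [hentry]; split_ifs <;> simp
  · simp only [hentry, hrow]; split_ifs <;> simp
  · simp only [hentry, sum_boole, Nat.cast_le_one]
    exact card_le_one.2 fun i hi j hj => Sum.inl_injective <|
      τ.injective ((mem_filter.1 hi).2.trans (mem_filter.1 hj).2.symm)
  · have hslack : ∀ b, (τ (.inr b)).isLeft := fun b => by
      cases h : τ (.inr b) <;> simp_all
    rw [Fintype.sum_sum_type] at hleft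
    simp only [hslack, if_true, sum_const, card_univ, nsmul_one] at hleft
    simp only [hentry, hrow]
    rw [← hβ] at hleft; push_cast at hleft; linarith

end SlackExtension

theorem substochasticPolytope_subset_convexHull {k : ℕ} (hι : k ≤ Fintype.card ι)
    (hκ : k ≤ Fintype.card κ) :
    substochasticPolytope ι κ k ⊆ convexHull ℝ (partialPermMatrices ι κ k) := by
  classical
  intro P hP
  let α := Fin (Fintype.card ι - k)
  let β := Fin (Fintype.card κ - k)
  have hα : Fintype.card α + k = Fintype.card ι := by simp [α]; omega
  have hβ : Fintype.card β + k = Fintype.card κ := by simp [β]; omega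
  let bijections := Set.range fun τ : ι ⊕ β ≃ κ ⊕ α => (τ.toPEquiv.toMatrix : Matrix _ _ ℝ)
  have hM : slackExtension P α β ∈ convexHull ℝ bijections :=
    mem_convexHull_range_toMatrix (by simp [α, β]; omega) (slackExtension_nonneg hP)
      (sum_slackExtension_row hP hα hβ) (sum_slackExtension_col hP hα hβ)
  have hnonneg : ∀ N ∈ bijections, 0 ≤ toBlocks₂₂Sum ℝ N := by
    rintro _ ⟨τ, rfl⟩
    rw [toBlocks₂₂Sum_apply]
    exact sum_nonneg fun b _ => sum_nonneg fun c _ => PEquiv.toMatrix_nonneg _ _ _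
  have hface := mem_convexHull_setOf_eq_zero (toBlocks₂₂Sum ℝ) hnonneg hM
    (by simp [toBlocks₂₂Sum, slackExtension])
  have himage := (toBlocks₁₁LinearMap ℝ).image_convexHull _ ▸
    Set.mem_image_of_mem (toBlocks₁₁LinearMap ℝ) hface
  refine convexHull_mono ?_ himage
  rintro _ ⟨_, ⟨⟨τ, rfl⟩, hτ⟩, rfl⟩
  exact toBlocks₁₁_toMatrix_mem_partialPermMatrices τ
    (ne_inr_of_toBlocks₂₂Sum_toMatrix_eq_zero hτ) hβ

theorem convexHull_partialPermMatrices {k : ℕ} (hι : k ≤ Fintype.card ι)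
    (hκ : k ≤ Fintype.card κ) :
    convexHull ℝ (partialPermMatrices ι κ k) = substochasticPolytope ι κ k :=
  (convexHull_min (partialPermMatrices_subset_substochasticPolytope k)
    (convex_substochasticPolytope k)).antisymm (substochasticPolytope_subset_convexHull hι hκ)

theorem extremePoints_substochasticPolytope {k : ℕ} (hι : k ≤ Fintype.card ι)
    (hκ : k ≤ Fintype.card κ) :
    (substochasticPolytope ι κ k).extremePoints ℝ = partialPermMatrices ι κ k := by
  refine subset_antisymm ?_ fun Q hQ => ?_
  · rw [← convexHull_partialPermMatrices hι hκ]
    exact extremePoints_convexHull_subset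
  · exact mem_extremePoints_of_eq_zero_or_eq_one (fun P hP => hP.1)
      (partialPermMatrices_subset_substochasticPolytope k hQ) hQ.1

theorem stmt_8 (m n k : ℕ) (hk : k ≤ min m n) :
    (∀ P : Fin m → Fin n → ℝ,
      (∀ i a, P i a ∈ Set.Icc (0 : ℝ) 1) →
      (∀ i, ∑ a, P i a ≤ 1) →
      (∀ a, ∑ i, P i a ≤ 1) →
      ∑ i, ∑ a, P i a = (k : ℝ) →
      P ∈ convexHull ℝ {Q : Fin m → Fin n → ℝ |
        (∀ i a, Q i a = 0 ∨ Q i a = 1) ∧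
        (∀ i, ∑ a, Q i a ≤ 1) ∧ (∀ a, ∑ i, Q i a ≤ 1) ∧
        ∑ i, ∑ a, Q i a = (k : ℝ)}) ∧
    Set.extremePoints ℝ
      {P : Fin m → Fin n → ℝ |
        (∀ i a, P i a ∈ Set.Icc (0 : ℝ) 1) ∧
        (∀ i, ∑ a, P i a ≤ 1) ∧ (∀ a, ∑ i, P i a ≤ 1) ∧
        ∑ i, ∑ a, P i a = (k : ℝ)} =
      {Q : Fin m → Fin n → ℝ |
        (∀ i a, Q i a = 0 ∨ Q i a = 1) ∧
        (∀ i, ∑ a, Q i a ≤ 1) ∧ (∀ a, ∑ i, Q i a ≤ 1) ∧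
        ∑ i, ∑ a, Q i a = (k : ℝ)} := by
  have hm : k ≤ Fintype.card (Fin m) := by simp; omega
  have hn : k ≤ Fintype.card (Fin n) := by simp; omega
  exact ⟨fun P h01 hrow hcol htot =>
      substochasticPolytope_subset_convexHull hm hn ⟨h01, hrow, hcol, htot⟩,
    extremePoints_substochasticPolytope hm hn⟩
end

section
/- Let D be an m×n matrix of nonnegative reals, A_I ⊆ {1,...,m} and B_I ⊆ {1,...,n} with |A_I|=|B_I|=k, and τ* : A_I → B_I a bijection such that: (i) for every i ∈ A_I, D_{i,τ*(i)} < D_{i,a} for all a ≠ τ*(i), and (ii) for every (i,a) with i ∉ A_I or a ∉ B_I, D_{ia} ≥ max_{i'∈A_I} D_{i',τ*(i')}. Then the matrix P* induced by τ* is a minimizer of the linear assignment objective F_u(P) = Σ_{i,a} D_{ia} P_{ia} over all k-cardinality partial permutation matrices P, and every minimizer P satisfies: each row of P supported outside A_I contributes cost at least max_{i'∈A_I} D_{i',τ*(i')}. -/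
/-!
Let `S` be the support of a feasible `P`: `k` cells, at most one per row. A cell of `S` in a row
`i ∈ A_I` costs at least `D i (τ i)` by consistency of the inliers. The rows of `A_I` not met this
way are exactly as many as the cells of `S` in outlier rows, and each of those cells costs at least
every inlier cost `D i' (τ i')` by distinguishability. Summing gives `F_u(P*) ≤ F_u(P)`.
The second claim holds for every feasible `P`, minimal or not: it is distinguishability applied
to the outlier row.
-/

open Finset

variable {ι κ M : Type*}

theorem Finset.sum_le_sum_of_card_eq_of_forall_le [AddCommMonoid M] [LinearOrder M]
    [IsOrderedAddMonoid M] {s : Finset ι} {t : Finset κ} {f : ι → M} {g : κ → M}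
    (hcard : #s = #t) (hfg : ∀ i ∈ s, ∀ j ∈ t, f i ≤ g j) :
    ∑ i ∈ s, f i ≤ ∑ j ∈ t, g j := by
  rcases t.eq_empty_or_nonempty with rfl | ht
  · simp [card_eq_zero.mp hcard]
  obtain ⟨j₀, hj₀, hmin⟩ := t.exists_mem_eq_inf' ht g
  calc ∑ i ∈ s, f i ≤ #s • g j₀ := sum_le_card_nsmul _ _ _ fun i hi => hfg i hi j₀ hj₀
    _ = #t • t.inf' ht g := by rw [hcard, hmin]
    _ ≤ ∑ j ∈ t, g j := card_nsmul_le_sum _ _ _ fun j hj => inf'_le g hj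

theorem sum_le_sum_of_injOn_fst [DecidableEq ι] [AddCommMonoid M] [LinearOrder M]
    [IsOrderedAddMonoid M] (D : ι → κ → M) (c : ι → M) {A : Finset ι} {S : Finset (ι × κ)}
    (hS : Set.InjOn Prod.fst (S : Set (ι × κ))) (hcard : #A = #S)
    (hin : ∀ i ∈ A, ∀ a, c i ≤ D i a) (hout : ∀ i ∉ A, ∀ a, ∀ i' ∈ A, c i' ≤ D i a) :
    ∑ i ∈ A, c i ≤ ∑ p ∈ S, D p.1 p.2 := by
  set Sin := S.filter (·.1 ∈ A)
  set Sout := S.filter (·.1 ∉ A)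
  have hinj : Set.InjOn Prod.fst (Sin : Set (ι × κ)) :=
    hS.mono (by simpa only [coe_subset] using filter_subset _ S)
  set T := Sin.image Prod.fst
  have hTA : T ⊆ A := by
    simp only [T, Sin, image_subset_iff, mem_filter]
    exact fun p hp => hp.2
  have hT : #T = #Sin := card_image_of_injOn hinj
  have hSplit : #Sin + #Sout = #S := card_filter_add_card_filter_not _
  have hInliers : ∑ i ∈ T, c i ≤ ∑ p ∈ Sin, D p.1 p.2 := by
    rw [sum_image fun p hp q hq => hinj hp hq]
    exact sum_le_sum fun p hp => hin p.1 (mem_filter.mp hp).2 p.2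
  have hOutliers : ∑ i ∈ A \ T, c i ≤ ∑ p ∈ Sout, D p.1 p.2 := by
    refine sum_le_sum_of_card_eq_of_forall_le ?_ fun i hi p hp => ?_
    · rw [card_sdiff_of_subset hTA]
      omega
    · exact hout p.1 (mem_filter.mp hp).2 p.2 i (mem_sdiff.mp hi).1
  calc ∑ i ∈ A, c i = ∑ i ∈ A \ T, c i + ∑ i ∈ T, c i := (sum_sdiff hTA).symm
    _ ≤ ∑ p ∈ Sout, D p.1 p.2 + ∑ p ∈ Sin, D p.1 p.2 := add_le_add hOutliers hInliers
    _ = ∑ p ∈ S, D p.1 p.2 := by rw [add_comm, sum_filter_add_sum_filter_not]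

section ZeroOneMatrix

variable [Fintype ι] [Fintype κ] {P : ι → κ → ℝ}

noncomputable def onesSupport (P : ι → κ → ℝ) : Finset (ι × κ) :=
  univ.filter fun p => P p.1 p.2 = 1

theorem sum_mul_eq_sum_onesSupport (h01 : ∀ i a, P i a = 0 ∨ P i a = 1) (D : ι → κ → ℝ) :
    ∑ i, ∑ a, D i a * P i a = ∑ p ∈ onesSupport P, D p.1 p.2 := by
  rw [← Fintype.sum_prod_type', onesSupport, sum_filter]
  refine sum_congr rfl fun p _ => ?_
  rcases h01 p.1 p.2 with h | h <;> simp [h]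

theorem card_onesSupport (h01 : ∀ i a, P i a = 0 ∨ P i a = 1) :
    (#(onesSupport P) : ℝ) = ∑ i, ∑ a, P i a := by
  simpa using (sum_mul_eq_sum_onesSupport h01 fun _ _ => 1).symm

theorem injOn_fst_onesSupport (h01 : ∀ i a, P i a = 0 ∨ P i a = 1)
    (hrow : ∀ i, ∑ a, P i a ≤ 1) :
    Set.InjOn Prod.fst (onesSupport P : Set (ι × κ)) := by
  rintro ⟨i, a⟩ hp ⟨i', b⟩ hq (rfl : i = i')
  simp only [coe_filter, onesSupport, mem_univ, true_and, Set.mem_ofPred_eq] at hp hq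
  by_contra hne
  have hab : a ≠ b := fun h => hne (by rw [h])
  have hnonneg : ∀ b ∈ univ, 0 ≤ P i b := fun b _ => by rcases h01 i b with h | h <;> simp [h]
  have := add_le_sum hnonneg (mem_univ a) (mem_univ b) hab
  linarith [hrow i]

end ZeroOneMatrix

theorem stmt_11_general (m n k : ℕ) (D : Fin m → Fin n → ℝ)
    (AI : Finset (Fin m)) (BI : Finset (Fin n))
    (hA : AI.card = k)
    (τ : Fin m → Fin n)
    (hcons : ∀ i ∈ AI, ∀ a, a ≠ τ i → D i (τ i) < D i a)
    (hdist : ∀ i a, (i ∉ AI ∨ a ∉ BI) → ∀ i' ∈ AI, D i' (τ i') ≤ D i a)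
    (Pstar : Fin m → Fin n → ℝ)
    (hPstar : ∀ i a, Pstar i a = if i ∈ AI ∧ a = τ i then 1 else 0) :
    (∀ P : Fin m → Fin n → ℝ,
      (∀ i a, P i a = 0 ∨ P i a = 1) →
      (∀ i, ∑ a, P i a ≤ 1) → (∀ a, ∑ i, P i a ≤ 1) →
      ∑ i, ∑ a, P i a = (k : ℝ) →
      ∑ i, ∑ a, D i a * Pstar i a ≤ ∑ i, ∑ a, D i a * P i a) ∧
    (∀ P : Fin m → Fin n → ℝ,
      ((∀ i a, P i a = 0 ∨ P i a = 1) ∧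
       (∀ i, ∑ a, P i a ≤ 1) ∧ (∀ a, ∑ i, P i a ≤ 1) ∧
       ∑ i, ∑ a, P i a = (k : ℝ)) →
      (∀ Q : Fin m → Fin n → ℝ,
        (∀ i a, Q i a = 0 ∨ Q i a = 1) →
        (∀ i, ∑ a, Q i a ≤ 1) → (∀ a, ∑ i, Q i a ≤ 1) →
        ∑ i, ∑ a, Q i a = (k : ℝ) →
        ∑ i, ∑ a, D i a * P i a ≤ ∑ i, ∑ a, D i a * Q i a) →
      ∀ i ∉ AI, ∀ a, P i a = 1 → ∀ i' ∈ AI, D i' (τ i') ≤ D i a) := by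
  refine ⟨fun P h01 hrow _ htot => ?_, fun P _ _ i hi a _ => hdist i a (Or.inl hi)⟩
  have hstar : ∑ i, ∑ a, D i a * Pstar i a = ∑ i ∈ AI, D i (τ i) := by
    simp [hPstar, mul_ite, ite_and, sum_ite_mem]
  have hsupp : (#(onesSupport P) : ℝ) = k := (card_onesSupport h01).trans htot
  have hcard : #AI = #(onesSupport P) := by
    rw [hA]
    exact_mod_cast hsupp.symm
  rw [hstar, sum_mul_eq_sum_onesSupport h01]
  refine sum_le_sum_of_injOn_fst D _ (injOn_fst_onesSupport h01 hrow) hcard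
    (fun i hi a => ?_) (fun i hi a => hdist i a (Or.inl hi))
  rcases eq_or_ne a (τ i) with rfl | ha
  · exact le_rfl
  · exact (hcons i hi a ha).le

theorem stmt_11 (m n k : ℕ) (D : Fin m → Fin n → ℝ)
    (hD : ∀ i a, 0 ≤ D i a)
    (AI : Finset (Fin m)) (BI : Finset (Fin n))
    (hA : AI.card = k) (hB : BI.card = k)
    (τ : Fin m → Fin n) (hτ : Set.BijOn τ ↑AI ↑BI)
    (hcons : ∀ i ∈ AI, ∀ a, a ≠ τ i → D i (τ i) < D i a)
    (hdist : ∀ i a, (i ∉ AI ∨ a ∉ BI) → ∀ i' ∈ AI, D i' (τ i') ≤ D i a)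
    (Pstar : Fin m → Fin n → ℝ)
    (hPstar : ∀ i a, Pstar i a = if i ∈ AI ∧ a = τ i then 1 else 0) :
    (∀ P : Fin m → Fin n → ℝ,
      (∀ i a, P i a = 0 ∨ P i a = 1) →
      (∀ i, ∑ a, P i a ≤ 1) → (∀ a, ∑ i, P i a ≤ 1) →
      ∑ i, ∑ a, P i a = (k : ℝ) →
      ∑ i, ∑ a, D i a * Pstar i a ≤ ∑ i, ∑ a, D i a * P i a) ∧
    (∀ P : Fin m → Fin n → ℝ,
      ((∀ i a, P i a = 0 ∨ P i a = 1) ∧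
       (∀ i, ∑ a, P i a ≤ 1) ∧ (∀ a, ∑ i, P i a ≤ 1) ∧
       ∑ i, ∑ a, P i a = (k : ℝ)) →
      (∀ Q : Fin m → Fin n → ℝ,
        (∀ i a, Q i a = 0 ∨ Q i a = 1) →
        (∀ i, ∑ a, Q i a ≤ 1) → (∀ a, ∑ i, Q i a ≤ 1) →
        ∑ i, ∑ a, Q i a = (k : ℝ) →
        ∑ i, ∑ a, D i a * P i a ≤ ∑ i, ∑ a, D i a * Q i a) →
      ∀ i ∉ AI, ∀ a, P i a = 1 → ∀ i' ∈ AI, D i' (τ i') ≤ D i a) :=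
  stmt_11_general m n k D AI BI hA τ hcons hdist Pstar hPstar
end

section
/- Under strict unary consistency and strict unary distinguishability — i.e., (i) for every i ∈ A_I, D_{i,τ*(i)} < D_{i,a} for all a ∈ B with a ≠ τ*(i), and D_{i,τ*(i)} < D_{i',τ*(i)} for all i' ≠ i, and (ii) D_{ia} > max_{i'∈A_I} D_{i',τ*(i')} whenever i ∉ A_I or a ∉ B_I — the matrix P* induced by τ* is the unique minimizer of F_u(P) = Σ_{i,a} D_{ia} P_{ia} over the set of k-cardinality partial permutation matrices. -/
/-!
A `0/1` matrix with row sums at most one is the graph matrix of a map `σ` restricted to a set `s`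
of rows, and its cost is `∑ i ∈ s, D i (σ i)`; the cardinality constraint forces `#s = k = #A_I`.
On the rows of `s ∩ A_I` unary consistency gives `D i (τ i) ≤ D i (σ i)`, strictly unless
`σ i = τ i`. The rows of `s \ A_I` and of `A_I \ s` are equally many, and by distinguishability
every cost paid on the former exceeds every diagonal cost saved on the latter. Hence `P` costs at
least as much as `P*`, with equality only when `s = A_I` and `σ = τ` on it, i.e. `P = P*`.
-/

open Finset

section Exchange

variable {α β M : Type*} [AddCommMonoid M] [LinearOrder M] [IsOrderedCancelAddMonoid M]

theorem sum_lt_sum_of_card_eq_of_forall_lt {s : Finset α} {t : Finset β} {f : α → M} {g : β → M}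
    (hcard : #s = #t) (hs : s.Nonempty) (h : ∀ x ∈ s, ∀ y ∈ t, f x < g y) :
    ∑ x ∈ s, f x < ∑ y ∈ t, g y := by
  obtain ⟨y₀, hy₀, hmin⟩ := t.exists_min_image g (card_pos.mp (hcard ▸ hs.card_pos))
  calc ∑ x ∈ s, f x < ∑ _x ∈ s, g y₀ := sum_lt_sum_of_nonempty hs fun x hx => h x hx y₀ hy₀
    _ = #t • g y₀ := by rw [sum_const, hcard]
    _ ≤ ∑ y ∈ t, g y := card_nsmul_le_sum t g (g y₀) hmin

variable [DecidableEq α]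

theorem eq_and_eqOn_of_sum_le_of_card_eq {s t : Finset α} {f g : α → M} (hcard : #s = #t)
    (hle : ∀ i ∈ s ∩ t, f i ≤ g i) (hlt : ∀ i ∈ t \ s, ∀ j ∈ s \ t, f i < g j)
    (hsum : ∑ i ∈ s, g i ≤ ∑ i ∈ t, f i) : s = t ∧ ∀ i ∈ s, f i = g i := by
  have hts : t \ s = ∅ := by
    by_contra hne
    have hdiff := sum_lt_sum_of_card_eq_of_forall_lt (card_sdiff_comm hcard.symm)
      (nonempty_iff_ne_empty.mpr hne) hlt
    rw [← sum_inter_add_sum_sdiff s t g, ← sum_inter_add_sum_sdiff t s f, inter_comm t s] at hsum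
    exact hsum.not_gt (add_lt_add_of_le_of_lt (sum_le_sum hle) hdiff)
  obtain rfl : s = t := (eq_of_subset_of_card_le (sdiff_eq_empty_iff_subset.mp hts) hcard.le).symm
  have hle' : ∀ i ∈ s, f i ≤ g i := fun i hi => hle i (by simpa using hi)
  exact ⟨rfl, (sum_eq_sum_iff_of_le hle').mp (le_antisymm (sum_le_sum hle') hsum)⟩

end Exchange

section GraphMatrix

variable {ι κ : Type*} [DecidableEq ι] [DecidableEq κ]

def graphMatrix (s : Finset ι) (σ : ι → κ) (i : ι) (a : κ) : ℝ :=
  if i ∈ s ∧ a = σ i then 1 else 0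

variable (s : Finset ι) (σ : ι → κ)

theorem graphMatrix_eq_zero_or_one (i : ι) (a : κ) :
    graphMatrix s σ i a = 0 ∨ graphMatrix s σ i a = 1 := by
  unfold graphMatrix; split_ifs <;> simp

theorem graphMatrix_congr {s : Finset ι} {σ τ : ι → κ} (h : Set.EqOn σ τ s) :
    graphMatrix s σ = graphMatrix s τ := by
  ext i a
  by_cases hi : i ∈ s
  · simp [graphMatrix, hi, h (mem_coe.mpr hi)]
  · simp [graphMatrix, hi]

theorem sum_mul_graphMatrix_row [Fintype κ] (w : κ → ℝ) (i : ι) :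
    ∑ a, w a * graphMatrix s σ i a = if i ∈ s then w (σ i) else 0 := by
  by_cases hi : i ∈ s <;> simp [graphMatrix, hi]

theorem sum_graphMatrix_row_le_one [Fintype κ] (i : ι) : ∑ a, graphMatrix s σ i a ≤ 1 := by
  simpa using (sum_mul_graphMatrix_row s σ 1 i).trans_le (by split_ifs <;> simp)

theorem sum_graphMatrix_col_le_one [Fintype ι] {s : Finset ι} {σ : ι → κ}
    (hσ : Set.InjOn σ s) (a : κ) : ∑ i, graphMatrix s σ i a ≤ 1 := by
  have hcard : #{i | i ∈ s ∧ a = σ i} ≤ 1 :=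
    card_le_one.mpr fun i hi j hj => by
      simp only [mem_filter_univ] at hi hj
      exact hσ hi.1 hj.1 (hi.2.symm.trans hj.2)
  simpa [graphMatrix, sum_boole] using hcard

theorem sum_mul_graphMatrix [Fintype ι] [Fintype κ] (D : ι → κ → ℝ) :
    ∑ i, ∑ a, D i a * graphMatrix s σ i a = ∑ i ∈ s, D i (σ i) := by
  simp only [sum_mul_graphMatrix_row, sum_ite_mem, univ_inter]

theorem sum_graphMatrix [Fintype ι] [Fintype κ] : ∑ i, ∑ a, graphMatrix s σ i a = #s := by
  simpa using sum_mul_graphMatrix s σ 1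

theorem eq_of_apply_eq_one_of_sum_le_one [Fintype κ] {x : κ → ℝ} (hx : ∀ b, 0 ≤ x b)
    (hsum : ∑ b, x b ≤ 1) {a b : κ} (ha : x a = 1) (hb : x b = 1) : a = b := by
  by_contra hab
  have := add_le_sum (fun c _ => hx c) (mem_univ a) (mem_univ b) hab
  linarith

theorem exists_eq_graphMatrix [Fintype ι] [Fintype κ] [Nonempty (ι → κ)] {P : ι → κ → ℝ}
    (h01 : ∀ i a, P i a = 0 ∨ P i a = 1) (hrow : ∀ i, ∑ a, P i a ≤ 1) :
    ∃ (s : Finset ι) (σ : ι → κ), P = graphMatrix s σ := by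
  obtain ⟨σ₀⟩ := ‹Nonempty (ι → κ)›
  have hnonneg : ∀ i a, 0 ≤ P i a := fun i a => by rcases h01 i a with h | h <;> simp [h]
  let σ i := if h : ∃ a, P i a = 1 then h.choose else σ₀ i
  have hσ : ∀ i a, P i a = 1 → σ i = a := fun i a hia => by
    have h : ∃ a, P i a = 1 := ⟨a, hia⟩
    simp only [σ, dif_pos h]
    exact eq_of_apply_eq_one_of_sum_le_one (hnonneg i) (hrow i) h.choose_spec hia
  refine ⟨({i | ∃ a, P i a = 1} : Finset ι), σ, funext₂ fun i a => ?_⟩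
  by_cases hia : P i a = 1
  · rw [hia, graphMatrix, if_pos ⟨(mem_filter_univ i).mpr ⟨a, hia⟩, (hσ i a hia).symm⟩]
  · rw [(h01 i a).resolve_right hia, graphMatrix, if_neg]
    rintro ⟨hi, rfl⟩
    obtain ⟨b, hb⟩ := (mem_filter_univ i).mp hi
    exact hia (hσ i b hb ▸ hb)

end GraphMatrix

theorem stmt_12_general (m n k : ℕ) (D : Fin m → Fin n → ℝ)
    (AI : Finset (Fin m)) (BI : Finset (Fin n))
    (hA : AI.card = k)
    (τ : Fin m → Fin n) (hτ : Set.BijOn τ ↑AI ↑BI)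
    (hcons1 : ∀ i ∈ AI, ∀ a, a ≠ τ i → D i (τ i) < D i a)
    (hdist : ∀ i a, (i ∉ AI ∨ a ∉ BI) → ∀ i' ∈ AI, D i' (τ i') < D i a)
    (Pstar : Fin m → Fin n → ℝ)
    (hPstar : ∀ i a, Pstar i a = if i ∈ AI ∧ a = τ i then 1 else 0) :
    ((∀ i a, Pstar i a = 0 ∨ Pstar i a = 1) ∧
     (∀ i, ∑ a, Pstar i a ≤ 1) ∧ (∀ a, ∑ i, Pstar i a ≤ 1) ∧
     ∑ i, ∑ a, Pstar i a = (k : ℝ)) ∧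
    (∀ P : Fin m → Fin n → ℝ,
      (∀ i a, P i a = 0 ∨ P i a = 1) →
      (∀ i, ∑ a, P i a ≤ 1) → (∀ a, ∑ i, P i a ≤ 1) →
      ∑ i, ∑ a, P i a = (k : ℝ) →
      P ≠ Pstar →
      ∑ i, ∑ a, D i a * Pstar i a < ∑ i, ∑ a, D i a * P i a) := by
  obtain rfl : Pstar = graphMatrix AI τ := funext₂ hPstar
  refine ⟨⟨graphMatrix_eq_zero_or_one AI τ, sum_graphMatrix_row_le_one AI τ,
    sum_graphMatrix_col_le_one hτ.injOn, by rw [sum_graphMatrix, hA]⟩, ?_⟩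
  intro P h01 hrow _ hsum hne
  have : Nonempty (Fin m → Fin n) := ⟨τ⟩
  obtain ⟨s, σ, rfl⟩ := exists_eq_graphMatrix h01 hrow
  have hcard : #s = #AI := by rw [hA]; exact_mod_cast (sum_graphMatrix s σ).symm.trans hsum
  rw [sum_mul_graphMatrix, sum_mul_graphMatrix]
  by_contra! hle
  have hrowwise : ∀ i ∈ s ∩ AI, D i (τ i) ≤ D i (σ i) := fun i hi => by
    rcases eq_or_ne (σ i) (τ i) with h | h
    · rw [h]
    · exact (hcons1 i (mem_inter.mp hi).2 _ h).le
  have hexcess : ∀ i ∈ AI \ s, ∀ j ∈ s \ AI, D i (τ i) < D j (σ j) := fun i hi j hj =>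
    hdist j (σ j) (.inl (mem_sdiff.mp hj).2) i (mem_sdiff.mp hi).1
  obtain ⟨rfl, heq⟩ := eq_and_eqOn_of_sum_le_of_card_eq hcard hrowwise hexcess hle
  refine hne (graphMatrix_congr fun i hi => ?_)
  by_contra h
  exact (hcons1 i hi _ h).ne (heq i hi)

theorem stmt_12 (m n k : ℕ) (hk : 1 ≤ k) (D : Fin m → Fin n → ℝ)
    (hD : ∀ i a, 0 ≤ D i a)
    (AI : Finset (Fin m)) (BI : Finset (Fin n))
    (hA : AI.card = k) (hB : BI.card = k)
    (τ : Fin m → Fin n) (hτ : Set.BijOn τ ↑AI ↑BI)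
    (hcons1 : ∀ i ∈ AI, ∀ a, a ≠ τ i → D i (τ i) < D i a)
    (hcons2 : ∀ i ∈ AI, ∀ i', i' ≠ i → D i (τ i) < D i' (τ i))
    (hdist : ∀ i a, (i ∉ AI ∨ a ∉ BI) → ∀ i' ∈ AI, D i' (τ i') < D i a)
    (Pstar : Fin m → Fin n → ℝ)
    (hPstar : ∀ i a, Pstar i a = if i ∈ AI ∧ a = τ i then 1 else 0) :
    ((∀ i a, Pstar i a = 0 ∨ Pstar i a = 1) ∧
     (∀ i, ∑ a, Pstar i a ≤ 1) ∧ (∀ a, ∑ i, Pstar i a ≤ 1) ∧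
     ∑ i, ∑ a, Pstar i a = (k : ℝ)) ∧
    (∀ P : Fin m → Fin n → ℝ,
      (∀ i a, P i a = 0 ∨ P i a = 1) →
      (∀ i, ∑ a, P i a ≤ 1) → (∀ a, ∑ i, P i a ≤ 1) →
      ∑ i, ∑ a, P i a = (k : ℝ) →
      P ≠ Pstar →
      ∑ i, ∑ a, D i a * Pstar i a < ∑ i, ∑ a, D i a * P i a) :=
  stmt_12_general m n k D AI BI hA τ hτ hcons1 hdist Pstar hPstar
end
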